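/- Let $T$ be an increasing ordered tree with $k$ edges. Then for all $n\ge k+1$, every $n$-vertex ordered graph with more than $(k-1)n - \binom{k}{2}$ edges contains a copy of $T$. -/

import Mathlib

/-
Induction along the construction of the tree. Let `T'` be `T` without its last edge, with
`c = k - 1` edges and longest edge `(i, j)`, and say the new edge is `(i, j')` with `j' > j`.
For every vertex `v < n - c` delete the edge from `v` to its highest neighbour above `v`. This
removes at most `n - c` edges, exactly the drop of the threshold from `k` to `k - 1`, so what is
left contains a copy of `T'`. As `T'` has `c + 1` vertices, none left of `i`, the image of `i` is
below `n - c`; so the surviving edge from the image of `i` to that of `j` is not the highest one,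
and sending `j'` to the highest neighbour extends the copy. A new edge `(i', j)` with `i' < i` is
the mirror image, handled by reversing the order of the vertices.
-/

/-- Vertex set of an ordered-graph pattern given by its edge set. -/
def verts (E : Finset (ℕ × ℕ)) : Finset ℕ := E.image Prod.fst ∪ E.image Prod.snd

/-- An increasing (ordered) tree with its current longest edge (i,j). -/
inductive IncTree : Finset (ℕ × ℕ) → ℕ → ℕ → Prop
  | single (i j : ℕ) : i < j → IncTree {(i, j)} i j
  | right (E : Finset (ℕ × ℕ)) (i j j' : ℕ) :
      IncTree E i j → j < j' → IncTree (insert (i, j') E) i j'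
  | left (E : Finset (ℕ × ℕ)) (i j i' : ℕ) :
      IncTree E i j → i' < i → IncTree (insert (i', j) E) i' j

/-- Ordered containment of a pattern in an n-vertex ordered graph. -/
def OContains {n : ℕ} (G : SimpleGraph (Fin n)) (E : Finset (ℕ × ℕ)) : Prop :=
  ∃ f : ℕ → Fin n, (∀ a ∈ verts E, ∀ b ∈ verts E, a < b → f a < f b) ∧
    ∀ p ∈ E, G.Adj (f p.1) (f p.2)

open Finset

lemma verts_insert (a b : ℕ) (E : Finset (ℕ × ℕ)) :
    verts (insert (a, b) E) = insert a (insert b (verts E)) := by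
  ext x
  simp only [verts, mem_union, mem_image, mem_insert, Prod.exists, exists_eq_or_imp]
  aesop

lemma verts_singleton (a b : ℕ) : verts {(a, b)} = {a, b} := by
  simp [verts]

lemma fst_mem_verts {E : Finset (ℕ × ℕ)} {p : ℕ × ℕ} (hp : p ∈ E) : p.1 ∈ verts E :=
  mem_union_left _ (mem_image_of_mem _ hp)

lemma snd_mem_verts {E : Finset (ℕ × ℕ)} {p : ℕ × ℕ} (hp : p ∈ E) : p.2 ∈ verts E :=
  mem_union_right _ (mem_image_of_mem _ hp)

lemma StrictMonoOn.card_le_card_Icc {α β : Type*} [LinearOrder α] [PartialOrder β]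
    [LocallyFiniteOrder β] {f : α → β} {s : Finset α} (hf : StrictMonoOn f s) {a b : α}
    (ha : a ∈ s) (hb : b ∈ s) (hs : (s : Set α) ⊆ Set.Icc a b) :
    #s ≤ #(Icc (f a) (f b)) := by
  refine card_le_card_of_injOn f (fun x hx => ?_) hf.injOn
  have hx' := hs hx
  exact mem_Icc.2 ⟨hf.monotoneOn ha hx hx'.1, hf.monotoneOn hx hb hx'.2⟩

lemma StrictMonoOn.update_insert {α β : Type*} [LinearOrder α] [Preorder β] [DecidableEq α]
    {f : α → β} {s : Set α} (hf : StrictMonoOn f s) {a : α} (ha : a ∉ s) {w : β}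
    (hw : ∀ b ∈ s, (b < a → f b < w) ∧ (a < b → w < f b)) :
    StrictMonoOn (Function.update f a w) (insert a s) := by
  have hoff : ∀ b ∈ s, Function.update f a w b = f b := fun b hb =>
    Function.update_of_ne (ne_of_mem_of_not_mem hb ha) _ _
  refine strictMonoOn_insert_iff.2 ⟨fun b hb hba => ?_, fun b hb hab => ?_, ?_⟩
  · rw [hoff b hb, Function.update_self]; exact (hw b hb).1 hba
  · rw [hoff b hb, Function.update_self]; exact (hw b hb).2 hab
  · exact hf.congr fun b hb => (hoff b hb).symm

theorem SimpleGraph.exists_le_ncard_le_add_forall_exists_gt_adj {α : Type*}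
    [LinearOrder α] [Fintype α] (G : SimpleGraph α) (V : Finset α) :
    ∃ G' ≤ G, G.edgeSet.ncard ≤ G'.edgeSet.ncard + #V ∧
      ∀ v ∈ V, ∀ u, v < u → G'.Adj v u → ∃ w, u < w ∧ G.Adj v w := by
  classical
  let up (v : α) : Finset α := {u | v < u ∧ G.Adj v u}
  let top (v : α) : α := if h : (up v).Nonempty then (up v).max' h else v
  let D : Finset (Sym2 α) := V.image fun v => s(v, top v)
  refine ⟨G.deleteEdges D, G.deleteEdges_le _, ?_, fun v hv u hvu hadj => ?_⟩
  · calc G.edgeSet.ncard ≤ (G.edgeSet \ D).ncard + (D : Set (Sym2 α)).ncard :=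
          Set.ncard_le_ncard_sdiff_add_ncard _ _
      _ ≤ (G.deleteEdges D).edgeSet.ncard + #V := by
          rw [SimpleGraph.edgeSet_deleteEdges, Set.ncard_coe_finset]
          exact Nat.add_le_add_left card_image_le _
  · rw [SimpleGraph.deleteEdges_adj] at hadj
    have hu : u ∈ up v := mem_filter.2 ⟨mem_univ _, hvu, hadj.1⟩
    have hne : (up v).Nonempty := ⟨u, hu⟩
    have htop : top v = (up v).max' hne := dif_pos hne
    refine ⟨top v, (htop ▸ le_max' _ _ hu).lt_of_ne fun hut => hadj.2 ?_,
      htop ▸ (mem_filter.1 (max'_mem _ hne)).2.2⟩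
    exact mem_image.2 ⟨v, hv, by rw [hut]⟩

theorem SimpleGraph.exists_le_ncard_le_add_forall_exists_lt_adj {α : Type*}
    [LinearOrder α] [Fintype α] (G : SimpleGraph α) (V : Finset α) :
    ∃ G' ≤ G, G.edgeSet.ncard ≤ G'.edgeSet.ncard + #V ∧
      ∀ v ∈ V, ∀ u, u < v → G'.Adj v u → ∃ w, w < u ∧ G.Adj v w :=
  SimpleGraph.exists_le_ncard_le_add_forall_exists_gt_adj (α := αᵒᵈ) G V

lemma mul_sub_choose_two_succ {c n : ℕ} (hc : 1 ≤ c) (hcn : c ≤ n) :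
    c * n - (c + 1).choose 2 = (c - 1) * n - c.choose 2 + (n - c) := by
  obtain ⟨d, rfl⟩ : ∃ d, c = d + 1 := ⟨c - 1, by omega⟩
  have hchoose : (d + 1).choose 2 ≤ d * n := by
    rw [Nat.choose_two_right, Nat.add_sub_cancel, mul_comm]
    exact (Nat.div_le_self _ _).trans (Nat.mul_le_mul_left d hcn)
  have hsucc : (d + 1 + 1).choose 2 = (d + 1).choose 2 + (d + 1) := by
    rw [Nat.choose_succ_succ', Nat.choose_one_right, add_comm]
  rw [hsucc, Nat.add_sub_cancel, add_mul, one_mul]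
  omega

lemma oContains_iff {n : ℕ} {G : SimpleGraph (Fin n)} {E : Finset (ℕ × ℕ)} :
    OContains G E ↔
      ∃ f : ℕ → Fin n, StrictMonoOn f (verts E) ∧ ∀ p ∈ E, G.Adj (f p.1) (f p.2) :=
  Iff.rfl

theorem oContains_insert_of_strictMonoOn {n : ℕ} {G : SimpleGraph (Fin n)}
    {E : Finset (ℕ × ℕ)} {f : ℕ → Fin n} (hf : StrictMonoOn f (verts E))
    (hE : ∀ p ∈ E, G.Adj (f p.1) (f p.2)) {x a : ℕ} {w : Fin n} (hx : x ∈ verts E)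
    (ha : a ∉ verts E) (hw : ∀ b ∈ verts E, (b < a → f b < w) ∧ (a < b → w < f b))
    (hxw : G.Adj (f x) w) :
    OContains G (insert (x, a) E) ∧ OContains G (insert (a, x) E) := by
  classical
  have hoff : ∀ b ∈ verts E, Function.update f a w b = f b := fun b hb =>
    Function.update_of_ne (ne_of_mem_of_not_mem hb ha) _ _
  have hmono : StrictMonoOn (Function.update f a w) (insert a (verts E) : Finset ℕ) := by
    rw [coe_insert]
    exact hf.update_insert ha hw
  have hadj : ∀ p ∈ E, G.Adj (Function.update f a w p.1) (Function.update f a w p.2) :=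
    fun p hp => by rw [hoff _ (fst_mem_verts hp), hoff _ (snd_mem_verts hp)]; exact hE p hp
  have hxa : G.Adj (Function.update f a w x) (Function.update f a w a) := by
    rwa [hoff x hx, Function.update_self]
  refine ⟨oContains_iff.2 ⟨Function.update f a w, ?_, ?_⟩,
    oContains_iff.2 ⟨Function.update f a w, ?_, ?_⟩⟩
  · rwa [verts_insert, insert_comm, insert_eq_of_mem hx]
  · exact forall_mem_insert _ _ _ |>.2 ⟨hxa, hadj⟩
  · rwa [verts_insert, insert_eq_of_mem hx]
  · exact forall_mem_insert _ _ _ |>.2 ⟨hxa.symm, hadj⟩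

theorem oContains_singleton {n : ℕ} {G : SimpleGraph (Fin n)} {a b : Fin n} (hab : a < b)
    (hG : G.Adj a b) {i j : ℕ} (hij : i < j) : OContains G {(i, j)} := by
  refine ⟨fun x => if x ≤ i then a else b, ?_, by simpa [hij.not_ge] using hG⟩
  rw [verts_singleton]
  intro x hx y hy hxy
  simp only [mem_insert, mem_singleton] at hx hy
  rcases hx with rfl | rfl <;> rcases hy with rfl | rfl <;>
    first | omega | simp [hij.not_ge, hab]

namespace IncTree

variable {E : Finset (ℕ × ℕ)} {i j : ℕ}

lemma lt (h : IncTree E i j) : i < j := by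
  induction h with
  | single i j h => exact h
  | right E i j j' _ hj ih => exact ih.trans hj
  | left E i j i' _ hi ih => exact hi.trans ih

lemma mem (h : IncTree E i j) : (i, j) ∈ E := by
  cases h <;> simp

lemma verts_subset_Icc (h : IncTree E i j) : (verts E : Set ℕ) ⊆ Set.Icc i j := by
  induction h with
  | single i j h => simp [verts_singleton, Set.insert_subset_iff, h.le]
  | right E i j j' h hj ih =>
    rw [verts_insert, coe_insert, coe_insert, Set.insert_subset_iff, Set.insert_subset_iff]
    exact ⟨⟨le_rfl, (h.lt.trans hj).le⟩, ⟨(h.lt.trans hj).le, le_rfl⟩,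
      ih.trans (Set.Icc_subset_Icc_right hj.le)⟩
  | left E i j i' h hi ih =>
    rw [verts_insert, coe_insert, coe_insert, Set.insert_subset_iff, Set.insert_subset_iff]
    exact ⟨⟨le_rfl, (hi.trans h.lt).le⟩, ⟨(hi.trans h.lt).le, le_rfl⟩,
      ih.trans (Set.Icc_subset_Icc_left hi.le)⟩

lemma notMem_verts_of_right_lt (h : IncTree E i j) {a : ℕ} (ha : j < a) : a ∉ verts E :=
  fun hv => (h.verts_subset_Icc hv).2.not_gt ha

lemma notMem_verts_of_lt_left (h : IncTree E i j) {a : ℕ} (ha : a < i) : a ∉ verts E :=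
  fun hv => (h.verts_subset_Icc hv).1.not_gt ha

lemma card_verts (h : IncTree E i j) : #(verts E) = #E + 1 := by
  induction h with
  | single i j h => simp [verts_singleton, h.ne]
  | right E i j j' h hj ih =>
    have hj' := h.notMem_verts_of_right_lt hj
    rw [verts_insert, insert_eq_of_mem (mem_insert_of_mem (fst_mem_verts h.mem)),
      card_insert_of_notMem hj', card_insert_of_notMem fun he => hj' (snd_mem_verts he), ih]
  | left E i j i' h hi ih =>
    have hi' := h.notMem_verts_of_lt_left hi
    rw [verts_insert, insert_comm, insert_eq_of_mem (mem_insert_of_mem (snd_mem_verts h.mem)),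
      card_insert_of_notMem hi', card_insert_of_notMem fun he => hi' (fst_mem_verts he), ih]

lemma left_mem_verts (hT : IncTree E i j) : i ∈ verts E := fst_mem_verts hT.mem

lemma right_mem_verts (hT : IncTree E i j) : j ∈ verts E := snd_mem_verts hT.mem

lemma val_add_card_le {n : ℕ} (hT : IncTree E i j) {f : ℕ → Fin n}
    (hf : StrictMonoOn f (verts E)) : (f i : ℕ) + #E ≤ f j := by
  have h := hf.card_le_card_Icc hT.left_mem_verts hT.right_mem_verts hT.verts_subset_Icc
  rw [hT.card_verts, Fin.card_Icc] at h
  omega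

variable {n : ℕ}

lemma oContains_insert_right (hT : IncTree E i j) {j' : ℕ} (hj : j < j') (hn : #E + 1 < n)
    (ih : ∀ G : SimpleGraph (Fin n), (#E - 1) * n - (#E).choose 2 < G.edgeSet.ncard →
      OContains G E)
    (G : SimpleGraph (Fin n)) (hG : #E * n - (#E + 1).choose 2 < G.edgeSet.ncard) :
    OContains G (insert (i, j') E) := by
  have hc : 1 ≤ #E := card_pos.2 ⟨_, hT.mem⟩
  obtain ⟨G', hG'G, hcount, hfar⟩ :=
    G.exists_le_ncard_le_add_forall_exists_gt_adj (Iio ⟨n - #E, by omega⟩)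
  rw [mul_sub_choose_two_succ hc (by omega)] at hG
  rw [Fin.card_Iio, Fin.val_mk] at hcount
  obtain ⟨f, hf, hE⟩ := oContains_iff.1 (ih G' (by omega))
  have hfi : f i ∈ Iio ⟨n - #E, by omega⟩ := by
    rw [mem_Iio, Fin.lt_def]
    exact Nat.lt_sub_iff_add_lt.2 ((hT.val_add_card_le hf).trans_lt (f j).isLt)
  obtain ⟨w, hjw, hiw⟩ :=
    hfar (f i) hfi (f j) (hf hT.left_mem_verts hT.right_mem_verts hT.lt) (hE _ hT.mem)
  refine (oContains_insert_of_strictMonoOn hf (fun p hp => hG'G (hE p hp)) hT.left_mem_verts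
    (hT.notMem_verts_of_right_lt hj) (fun b hb => ⟨fun _ => ?_, fun hjb => ?_⟩) hiw).1
  · exact (hf.monotoneOn hb hT.right_mem_verts (hT.verts_subset_Icc hb).2).trans_lt hjw
  · exact absurd ((hT.verts_subset_Icc hb).2.trans_lt hj) hjb.not_gt

lemma oContains_insert_left (hT : IncTree E i j) {i' : ℕ} (hi : i' < i) (hn : #E + 1 < n)
    (ih : ∀ G : SimpleGraph (Fin n), (#E - 1) * n - (#E).choose 2 < G.edgeSet.ncard →
      OContains G E)
    (G : SimpleGraph (Fin n)) (hG : #E * n - (#E + 1).choose 2 < G.edgeSet.ncard) :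
    OContains G (insert (i', j) E) := by
  have hc : 1 ≤ #E := card_pos.2 ⟨_, hT.mem⟩
  obtain ⟨G', hG'G, hcount, hfar⟩ :=
    G.exists_le_ncard_le_add_forall_exists_lt_adj (Ici ⟨#E, by omega⟩)
  rw [mul_sub_choose_two_succ hc (by omega)] at hG
  rw [Fin.card_Ici, Fin.val_mk] at hcount
  obtain ⟨f, hf, hE⟩ := oContains_iff.1 (ih G' (by omega))
  have hfj : f j ∈ Ici ⟨#E, by omega⟩ := by
    rw [mem_Ici, Fin.le_def]
    exact (Nat.le_add_left _ _).trans (hT.val_add_card_le hf)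
  obtain ⟨w, hwi, hjw⟩ :=
    hfar (f j) hfj (f i) (hf hT.left_mem_verts hT.right_mem_verts hT.lt) (hE _ hT.mem).symm
  refine (oContains_insert_of_strictMonoOn hf (fun p hp => hG'G (hE p hp)) hT.right_mem_verts
    (hT.notMem_verts_of_lt_left hi) (fun b hb => ⟨fun hbi => ?_, fun _ => ?_⟩) hjw).2
  · exact absurd ((hT.verts_subset_Icc hb).1.trans_lt' hi) hbi.not_gt
  · exact hwi.trans_le (hf.monotoneOn hT.left_mem_verts hb (hT.verts_subset_Icc hb).1)

theorem oContains (hT : IncTree E i j) (hn : #E < n) (G : SimpleGraph (Fin n))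
    (hG : (#E - 1) * n - (#E).choose 2 < G.edgeSet.ncard) : OContains G E := by
  induction hT generalizing G with
  | single i j hij =>
    obtain ⟨e, he⟩ := Set.nonempty_of_ncard_ne_zero (by simpa using hG.ne')
    induction e using Sym2.ind with
    | _ a b =>
      rcases (G.ne_of_adj he).lt_or_gt with hab | hba
      · exact oContains_singleton hab he hij
      · exact oContains_singleton hba he.symm hij
  | right E i j j' hT hj ih =>
    rw [card_insert_of_notMem fun he => hT.notMem_verts_of_right_lt hj (snd_mem_verts he)] at hn hG
    rw [Nat.add_sub_cancel] at hG
    exact hT.oContains_insert_right hj hn (ih (by omega)) G hG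
  | left E i j i' hT hi ih =>
    rw [card_insert_of_notMem fun he => hT.notMem_verts_of_lt_left hi (fst_mem_verts he)] at hn hG
    rw [Nat.add_sub_cancel] at hG
    exact hT.oContains_insert_left hi hn (ih (by omega)) G hG

end IncTree

/-- For an increasing tree T with k edges and n ≥ k+1, every n-vertex
ordered graph with more than (k-1)n - C(k,2) edges contains a copy of T. -/
theorem stmt_7 (k n : ℕ) (E : Finset (ℕ × ℕ)) (i j : ℕ)
    (hT : IncTree E i j) (hk : E.card = k) (hn : k + 1 ≤ n) :
    ∀ G : SimpleGraph (Fin n), (k - 1) * n - k.choose 2 < G.edgeSet.ncard →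
      OContains G E := by
  subst hk
  exact hT.oContains hn
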